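/- arXiv:1502.02954 — 2 statements merged into one kernel-verified Lean document; each statement's English description precedes it below -/
import Mathlib

section
/- Let μ and ν be quaternionic measures on (Ω, 𝒜) and (Υ, ℬ) respectively, and let μ × ν be their product measure (the unique quaternionic measure on 𝒜 ⊗ ℬ with (μ×ν)(A×B) = μ(A)ν(B)). Then the total variation of the product satisfies |μ × ν| = |μ| × |ν| (the product of the positive total variation measures). -/
open scoped Quaternion ENNReal
open MeasureTheory
open scoped symmDiff

noncomputable section

variable {Ω Υ : Type*} [MeasurableSpace Ω] [MeasurableSpace Υ]

/-- The total variation of a quaternionic (vector) measure. -/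
def qvar {α : Type*} [MeasurableSpace α] (μ : VectorMeasure α ℍ[ℝ]) (A : Set α) : ℝ≥0∞ :=
  ⨆ (π : ℕ → Set α) (_ : ∀ i, MeasurableSet (π i))
    (_ : Pairwise (Function.onFun Disjoint π)) (_ : (⋃ i, π i) = A),
    ∑' i, (‖μ (π i)‖₊ : ℝ≥0∞)

set_option linter.unusedSectionVars false

lemma le_qvar {α : Type*} [MeasurableSpace α] (μ : VectorMeasure α ℍ[ℝ]) {A : Set α}
    {p : ℕ → Set α} (h1 : ∀ i, MeasurableSet (p i)) (h2 : Pairwise (Function.onFun Disjoint p))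
    (h3 : (⋃ i, p i) = A) : ∑' i, (‖μ (p i)‖₊ : ℝ≥0∞) ≤ qvar μ A := by
  rw [qvar]
  exact le_iSup_of_le p <| le_iSup_of_le h1 <| le_iSup_of_le h2 <| le_iSup_of_le h3 le_rfl

lemma nnnorm_le_qvar {α : Type*} [MeasurableSpace α] (μ : VectorMeasure α ℍ[ℝ]) {A : Set α}
    (hA : MeasurableSet A) : (‖μ A‖₊ : ℝ≥0∞) ≤ qvar μ A := by
  set p : ℕ → Set α := fun n => if n = 0 then A else (∅ : Set α) with hp
  have h1 : ∀ i, MeasurableSet (p i) := by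
    intro i; rw [hp]; dsimp only; split <;> simp [hA]
  have h2 : Pairwise (Function.onFun Disjoint p) := by
    intro i j hij
    unfold Function.onFun
    rcases eq_or_ne i 0 with rfl | hi
    · simp [p, hij.symm]
    · simp [p, hi]
  have h3 : (⋃ i, p i) = A := by
    apply Set.Subset.antisymm
    · exact Set.iUnion_subset fun i => by rw [hp]; dsimp only; split <;> simp
    · exact le_trans (by simp [p]) (Set.subset_iUnion p 0)
  refine le_trans ?_ (le_qvar μ h1 h2 h3)
  rw [tsum_eq_single 0 (fun b hb => by simp [p, hb])]
  simp [p]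

lemma qvar_le_measure {α : Type*} [MeasurableSpace α] (μ : VectorMeasure α ℍ[ℝ]) (m : Measure α)
    (h : ∀ D : Set α, MeasurableSet D → (‖μ D‖₊ : ℝ≥0∞) ≤ m D) {A : Set α} :
    qvar μ A ≤ m A := by
  rw [qvar]
  refine iSup_le fun p => iSup_le fun hm => iSup_le fun hd => iSup_le fun hu => ?_
  calc ∑' i, (‖μ (p i)‖₊ : ℝ≥0∞) ≤ ∑' i, m (p i) := ENNReal.tsum_le_tsum fun i => h _ (hm i)
    _ = m (⋃ i, p i) := (measure_iUnion hd hm).symm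
    _ = m A := by rw [hu]

lemma qvar_subadd {α : Type*} [MeasurableSpace α] (μ : VectorMeasure α ℍ[ℝ]) {C : Set α}
    (hC : MeasurableSet C) : qvar μ Set.univ ≤ qvar μ C + qvar μ Cᶜ := by
  rw [qvar]
  refine iSup_le fun p => iSup_le fun hm => iSup_le fun hd => iSup_le fun hu => ?_
  have key : ∀ i, (‖μ (p i)‖₊ : ℝ≥0∞) ≤ ‖μ (p i ∩ C)‖₊ + ‖μ (p i ∩ Cᶜ)‖₊ := by
    intro i
    have hsplit : μ (p i) = μ (p i ∩ C) + μ (p i ∩ Cᶜ) := by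
      rw [← VectorMeasure.of_union (Set.disjoint_of_subset Set.inter_subset_right
          Set.inter_subset_right disjoint_compl_right) ((hm i).inter hC) ((hm i).inter hC.compl),
        Set.inter_union_compl]
    rw [hsplit]
    exact_mod_cast nnnorm_add_le _ _
  calc ∑' i, (‖μ (p i)‖₊ : ℝ≥0∞)
      ≤ ∑' i, ((‖μ (p i ∩ C)‖₊ : ℝ≥0∞) + ‖μ (p i ∩ Cᶜ)‖₊) := ENNReal.tsum_le_tsum key
    _ = (∑' i, (‖μ (p i ∩ C)‖₊ : ℝ≥0∞)) + ∑' i, (‖μ (p i ∩ Cᶜ)‖₊ : ℝ≥0∞) := ENNReal.tsum_add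
    _ ≤ qvar μ C + qvar μ Cᶜ := by
        gcongr
        · refine le_qvar μ (fun i => (hm i).inter hC)
            (fun i j hij => Set.disjoint_of_subset Set.inter_subset_left Set.inter_subset_left
              (hd hij)) ?_
          rw [← Set.iUnion_inter, hu, Set.univ_inter]
        · refine le_qvar μ (fun i => (hm i).inter hC.compl)
            (fun i j hij => Set.disjoint_of_subset Set.inter_subset_left Set.inter_subset_left
              (hd hij)) ?_
          rw [← Set.iUnion_inter, hu, Set.univ_inter]

lemma quat_norm_le (q : ℍ[ℝ]) : ‖q‖ ≤ |q.re| + |q.imI| + |q.imJ| + |q.imK| := by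
  have h1 : ‖q‖ * ‖q‖ = q.re ^ 2 + q.imI ^ 2 + q.imJ ^ 2 + q.imK ^ 2 := by
    rw [← Quaternion.normSq_eq_norm_mul_self, Quaternion.normSq_def']
  nlinarith [abs_nonneg q.re, abs_nonneg q.imI, abs_nonneg q.imJ, abs_nonneg q.imK,
    sq_abs q.re, sq_abs q.imI, sq_abs q.imJ, sq_abs q.imK, norm_nonneg q,
    mul_nonneg (abs_nonneg q.re) (abs_nonneg q.imI),
    mul_nonneg (abs_nonneg q.re) (abs_nonneg q.imJ),
    mul_nonneg (abs_nonneg q.re) (abs_nonneg q.imK),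
    mul_nonneg (abs_nonneg q.imI) (abs_nonneg q.imJ),
    mul_nonneg (abs_nonneg q.imI) (abs_nonneg q.imK),
    mul_nonneg (abs_nonneg q.imJ) (abs_nonneg q.imK)]

/-- The four coordinate additive maps on quaternions. -/
def quatComp : Fin 4 → (ℍ[ℝ] →+ ℝ)
  | 0 => { toFun := fun q : ℍ[ℝ] => q.re, map_zero' := rfl, map_add' := fun _ _ => rfl }
  | 1 => { toFun := fun q : ℍ[ℝ] => q.imI, map_zero' := rfl, map_add' := fun _ _ => rfl }
  | 2 => { toFun := fun q : ℍ[ℝ] => q.imJ, map_zero' := rfl, map_add' := fun _ _ => rfl }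
  | 3 => { toFun := fun q : ℍ[ℝ] => q.imK, map_zero' := rfl, map_add' := fun _ _ => rfl }

lemma quatComp_continuous : ∀ r : Fin 4, Continuous (quatComp r)
  | 0 => Quaternion.continuous_re
  | 1 => Quaternion.continuous_imI
  | 2 => Quaternion.continuous_imJ
  | 3 => Quaternion.continuous_imK

@[simp] lemma quatComp_zero (q : ℍ[ℝ]) : quatComp 0 q = q.re := rfl
@[simp] lemma quatComp_one (q : ℍ[ℝ]) : quatComp 1 q = q.imI := rfl
@[simp] lemma quatComp_two (q : ℍ[ℝ]) : quatComp 2 q = q.imJ := rfl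
@[simp] lemma quatComp_three (q : ℍ[ℝ]) : quatComp 3 q = q.imK := rfl

lemma quat_ennnorm_le (q : ℍ[ℝ]) :
    (‖q‖₊ : ℝ≥0∞) ≤ ∑ r : Fin 4, (‖quatComp r q‖₊ : ℝ≥0∞) := by
  have : (‖q‖₊ : ℝ≥0∞) = ENNReal.ofReal ‖q‖ := by
    rw [← enorm_eq_nnnorm, ← ofReal_norm]
  rw [this]
  have h2 : ∑ r : Fin 4, (‖quatComp r q‖₊ : ℝ≥0∞)
      = ENNReal.ofReal (|q.re| + |q.imI| + |q.imJ| + |q.imK|) := by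
    rw [Fin.sum_univ_four]
    simp only [quatComp_zero, quatComp_one, quatComp_two, quatComp_three,
      ← enorm_eq_nnnorm, ← ofReal_norm, Real.norm_eq_abs]
    rw [← ENNReal.ofReal_add (abs_nonneg _) (abs_nonneg _),
      ← ENNReal.ofReal_add (by positivity) (abs_nonneg _),
      ← ENNReal.ofReal_add (by positivity) (abs_nonneg _)]
  rw [h2]
  exact ENNReal.ofReal_le_ofReal (quat_norm_le q)

lemma signed_ennnorm_le {α : Type*} [MeasurableSpace α] (s : SignedMeasure α) {D : Set α}
    (hD : MeasurableSet D) : (‖s D‖₊ : ℝ≥0∞) ≤ s.totalVariation D := by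
  haveI := s.toJordanDecomposition.posPart_finite
  haveI := s.toJordanDecomposition.negPart_finite
  have happ : s D = (s.toJordanDecomposition.posPart D).toReal
      - (s.toJordanDecomposition.negPart D).toReal := by
    conv_lhs => rw [← s.toSignedMeasure_toJordanDecomposition]
    rw [JordanDecomposition.toSignedMeasure, Measure.toSignedMeasure_sub_apply hD]
    rfl
  rw [SignedMeasure.totalVariation, Measure.add_apply, happ,
    ← enorm_eq_nnnorm, ← ofReal_norm, Real.norm_eq_abs]
  have h1 : (s.toJordanDecomposition.posPart D) ≠ ∞ := measure_ne_top _ _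
  have h2 : (s.toJordanDecomposition.negPart D) ≠ ∞ := measure_ne_top _ _
  calc ENNReal.ofReal |(s.toJordanDecomposition.posPart D).toReal
        - (s.toJordanDecomposition.negPart D).toReal|
      ≤ ENNReal.ofReal ((s.toJordanDecomposition.posPart D).toReal
        + (s.toJordanDecomposition.negPart D).toReal) := by
        apply ENNReal.ofReal_le_ofReal
        rw [abs_le]
        constructor <;> nlinarith [ENNReal.toReal_nonneg (a := s.toJordanDecomposition.posPart D),
          ENNReal.toReal_nonneg (a := s.toJordanDecomposition.negPart D)]
    _ = s.toJordanDecomposition.posPart D + s.toJordanDecomposition.negPart D := by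
        rw [ENNReal.ofReal_add ENNReal.toReal_nonneg ENNReal.toReal_nonneg,
          ENNReal.ofReal_toReal h1, ENNReal.ofReal_toReal h2]

/-- A dominating finite measure for a quaternionic vector measure. -/
def qdom {α : Type*} [MeasurableSpace α] (v : VectorMeasure α ℍ[ℝ]) : Measure α :=
  ∑ r : Fin 4, SignedMeasure.totalVariation (v.mapRange (quatComp r) (quatComp_continuous r))

instance {α : Type*} [MeasurableSpace α] (v : VectorMeasure α ℍ[ℝ]) :
    IsFiniteMeasure (qdom v) := by
  rw [qdom]
  have : ∀ r : Fin 4,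
      IsFiniteMeasure (SignedMeasure.totalVariation (v.mapRange (quatComp r) (quatComp_continuous r))) := by
    intro r
    haveI := (SignedMeasure.toJordanDecomposition
      (v.mapRange (quatComp r) (quatComp_continuous r))).posPart_finite
    haveI := (SignedMeasure.toJordanDecomposition
      (v.mapRange (quatComp r) (quatComp_continuous r))).negPart_finite
    rw [SignedMeasure.totalVariation]
    infer_instance
  infer_instance

lemma ennnorm_le_qdom {α : Type*} [MeasurableSpace α] (v : VectorMeasure α ℍ[ℝ]) {D : Set α}
    (hD : MeasurableSet D) : (‖v D‖₊ : ℝ≥0∞) ≤ qdom v D := by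
  calc (‖v D‖₊ : ℝ≥0∞) ≤ ∑ r : Fin 4, (‖quatComp r (v D)‖₊ : ℝ≥0∞) := quat_ennnorm_le _
    _ ≤ ∑ r : Fin 4, SignedMeasure.totalVariation (v.mapRange (quatComp r) (quatComp_continuous r)) D := by
        gcongr with r
        rw [show quatComp r (v D) = (v.mapRange (quatComp r) (quatComp_continuous r)) D from
          (VectorMeasure.mapRange_apply v (quatComp_continuous r) : _).symm]
        exact signed_ennnorm_le _ hD
    _ = qdom v D := by
        rw [qdom, Measure.finset_sum_apply]
/-- Finite disjoint unions of measurable rectangles. -/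
def rectAlg (Ω Υ : Type*) [MeasurableSpace Ω] [MeasurableSpace Υ] : Set (Set (Ω × Υ)) :=
  {E | ∃ s : Finset (Set Ω × Set Υ),
    (∀ p ∈ s, MeasurableSet p.1 ∧ MeasurableSet p.2) ∧
    (∀ p ∈ s, ∀ q ∈ s, p ≠ q → Disjoint (p.1 ×ˢ p.2) (q.1 ×ˢ q.2)) ∧
    E = ⋃ p ∈ s, p.1 ×ˢ p.2}

lemma rectAlg_empty : (∅ : Set (Ω × Υ)) ∈ rectAlg Ω Υ :=
  ⟨∅, by simp, by simp, by simp⟩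

lemma rectAlg_rect {A : Set Ω} {B : Set Υ} (hA : MeasurableSet A) (hB : MeasurableSet B) :
    A ×ˢ B ∈ rectAlg Ω Υ :=
  ⟨{(A, B)}, by simp [hA, hB], by simp, by simp⟩

lemma rectAlg_measurableSet {E : Set (Ω × Υ)} (hE : E ∈ rectAlg Ω Υ) : MeasurableSet E := by
  obtain ⟨s, hs1, -, rfl⟩ := hE
  exact MeasurableSet.biUnion s.countable_toSet fun p hp => ((hs1 p hp).1).prod ((hs1 p hp).2)

lemma prod_disjoint_of_fst {A A' : Set Ω} {B B' : Set Υ} (h : Disjoint A A') :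
    Disjoint (A ×ˢ B) (A' ×ˢ B') := by
  rw [Set.disjoint_left]
  rintro ⟨x, y⟩ ⟨hx, -⟩ ⟨hx', -⟩
  exact (Set.disjoint_left.1 h) hx hx'

lemma rectAlg_inter {E F : Set (Ω × Υ)} (hE : E ∈ rectAlg Ω Υ) (hF : F ∈ rectAlg Ω Υ) :
    E ∩ F ∈ rectAlg Ω Υ := by
  classical
  obtain ⟨s, hs1, hs2, rfl⟩ := hE
  obtain ⟨t, ht1, ht2, rfl⟩ := hF
  refine ⟨(s ×ˢ t).image (fun pq => (pq.1.1 ∩ pq.2.1, pq.1.2 ∩ pq.2.2)), ?_, ?_, ?_⟩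
  · rintro p hp
    simp only [Finset.mem_image, Finset.mem_product] at hp
    obtain ⟨⟨u, w⟩, ⟨hu, hw⟩, rfl⟩ := hp
    exact ⟨((hs1 u hu).1).inter ((ht1 w hw).1), ((hs1 u hu).2).inter ((ht1 w hw).2)⟩
  · rintro p hp q hq hpq
    simp only [Finset.mem_image, Finset.mem_product] at hp hq
    obtain ⟨⟨u, w⟩, ⟨hu, hw⟩, rfl⟩ := hp
    obtain ⟨⟨u', w'⟩, ⟨hu', hw'⟩, rfl⟩ := hq
    have hne : u ≠ u' ∨ w ≠ w' := by
      by_contra hcon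
      push_neg at hcon
      exact hpq (by rw [hcon.1, hcon.2])
    have key : ∀ (a : Set Ω × Set Υ) (b : Set Ω × Set Υ),
        (a.1 ∩ b.1) ×ˢ (a.2 ∩ b.2) ⊆ a.1 ×ˢ a.2 ∩ b.1 ×ˢ b.2 := by
      intro a b
      rw [Set.prod_inter_prod]
    rcases hne with hne | hne
    · exact Set.disjoint_of_subset
        ((key u w).trans Set.inter_subset_left) ((key u' w').trans Set.inter_subset_left)
        (hs2 u hu u' hu' hne)
    · exact Set.disjoint_of_subset
        ((key u w).trans Set.inter_subset_right) ((key u' w').trans Set.inter_subset_right)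
        (ht2 w hw w' hw' hne)
  · ext x
    simp only [Set.mem_inter_iff, Set.mem_iUnion, Finset.mem_image, Finset.mem_product,
      Set.mem_prod, exists_prop]
    constructor
    · rintro ⟨⟨p, hp, hx1⟩, ⟨q, hq, hx2⟩⟩
      exact ⟨(p.1 ∩ q.1, p.2 ∩ q.2), ⟨(p, q), ⟨hp, hq⟩, rfl⟩, ⟨hx1.1, hx2.1⟩, ⟨hx1.2, hx2.2⟩⟩
    · rintro ⟨r, ⟨⟨p, q⟩, ⟨hp, hq⟩, rfl⟩, hx1, hx2⟩
      exact ⟨⟨p, hp, hx1.1, hx2.1⟩, ⟨q, hq, hx1.2, hx2.2⟩⟩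

lemma rectAlg_univ : (Set.univ : Set (Ω × Υ)) ∈ rectAlg Ω Υ := by
  have := rectAlg_rect (MeasurableSet.univ (α := Ω)) (MeasurableSet.univ (α := Υ))
  rwa [Set.univ_prod_univ] at this

lemma rectAlg_rect_compl {A : Set Ω} {B : Set Υ} (hA : MeasurableSet A) (hB : MeasurableSet B) :
    (A ×ˢ B)ᶜ ∈ rectAlg Ω Υ := by
  classical
  refine ⟨insert (Aᶜ, (Set.univ : Set Υ)) {(A, Bᶜ)}, ?_, ?_, ?_⟩
  · rintro p hp
    simp only [Finset.mem_insert, Finset.mem_singleton] at hp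
    rcases hp with rfl | rfl
    · exact ⟨hA.compl, MeasurableSet.univ⟩
    · exact ⟨hA, hB.compl⟩
  · rintro p hp q hq hpq
    simp only [Finset.mem_insert, Finset.mem_singleton] at hp hq
    rcases hp with rfl | rfl <;> rcases hq with rfl | rfl
    · exact absurd rfl hpq
    · exact prod_disjoint_of_fst (disjoint_compl_left : Disjoint Aᶜ A)
    · exact prod_disjoint_of_fst (disjoint_compl_right : Disjoint A Aᶜ)
    · exact absurd rfl hpq
  · ext ⟨x, y⟩
    simp only [Set.mem_compl_iff, Set.mem_prod, Set.mem_iUnion, Finset.mem_insert,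
      Finset.mem_singleton, exists_prop]
    constructor
    · intro h
      by_cases hx : x ∈ A
      · exact ⟨(A, Bᶜ), Or.inr rfl, hx, fun hy => h ⟨hx, hy⟩⟩
      · exact ⟨(Aᶜ, Set.univ), Or.inl rfl, hx, trivial⟩
    · rintro ⟨p, hp | hp, hxy⟩ ⟨hx, hy⟩ <;> subst hp
      · exact hxy.1 hx
      · exact hxy.2 hy

lemma rectAlg_biInter {ι : Type*} (s : Finset ι) (X : ι → Set (Ω × Υ))
    (h : ∀ i ∈ s, X i ∈ rectAlg Ω Υ) : (⋂ i ∈ s, X i) ∈ rectAlg Ω Υ := by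
  classical
  induction s using Finset.induction_on with
  | empty => simpa using rectAlg_univ
  | insert _ _ ha ih =>
    rw [Finset.set_biInter_insert]
    exact rectAlg_inter (h _ (Finset.mem_insert_self _ _))
      (ih fun i hi => h i (Finset.mem_insert_of_mem hi))

lemma rectAlg_compl {E : Set (Ω × Υ)} (hE : E ∈ rectAlg Ω Υ) : Eᶜ ∈ rectAlg Ω Υ := by
  obtain ⟨s, hs1, -, rfl⟩ := hE
  rw [Set.compl_iUnion₂]
  exact rectAlg_biInter s _ fun p hp => rectAlg_rect_compl (hs1 p hp).1 (hs1 p hp).2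

lemma rectAlg_isSetAlgebra : IsSetAlgebra (rectAlg Ω Υ) where
  empty_mem := rectAlg_empty
  compl_mem _ h := rectAlg_compl h
  union_mem s t hs ht := by
    have := rectAlg_compl (rectAlg_inter (rectAlg_compl hs) (rectAlg_compl ht))
    rwa [Set.compl_inter, compl_compl, compl_compl] at this

lemma rectAlg_generateFrom :
    (Prod.instMeasurableSpace : MeasurableSpace (Ω × Υ)) =
      MeasurableSpace.generateFrom (rectAlg Ω Υ) := by
  apply le_antisymm
  · rw [← generateFrom_prod]
    apply MeasurableSpace.generateFrom_le
    rintro _ ⟨A, hA, B, hB, rfl⟩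
    exact MeasurableSpace.measurableSet_generateFrom (rectAlg_rect hA hB)
  · exact MeasurableSpace.generateFrom_le fun E hE => rectAlg_measurableSet hE
lemma prod_disjoint_of_snd {Ω Υ : Type*} {A A' : Set Ω} {B B' : Set Υ} (h : Disjoint B B') :
    Disjoint (A ×ˢ B) (A' ×ˢ B') := by
  rw [Set.disjoint_left]
  rintro ⟨x, y⟩ ⟨-, hy⟩ ⟨-, hy'⟩
  exact (Set.disjoint_left.1 h) hy hy'

lemma vm_finset_biUnion {α ι : Type*} [MeasurableSpace α] (v : VectorMeasure α ℍ[ℝ])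
    (s : Finset ι) (X : ι → Set α) (hm : ∀ p ∈ s, MeasurableSet (X p))
    (hd : ∀ p ∈ s, ∀ q ∈ s, p ≠ q → Disjoint (X p) (X q)) :
    v (⋃ p ∈ s, X p) = ∑ p ∈ s, v (X p) := by
  classical
  induction s using Finset.induction_on with
  | empty => simp
  | @insert a s ha ih =>
    have hdisj : Disjoint (X a) (⋃ p ∈ s, X p) := by
      rw [Set.disjoint_iUnion₂_right]
      intro p hp
      exact hd a (Finset.mem_insert_self _ _) p (Finset.mem_insert_of_mem hp)
        (fun h => ha (h ▸ hp))
    rw [Finset.set_biUnion_insert, Finset.sum_insert ha,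
      VectorMeasure.of_union hdisj (hm a (Finset.mem_insert_self _ _))
        (MeasurableSet.biUnion s.countable_toSet fun p hp => hm p (Finset.mem_insert_of_mem hp)),
      ih (fun p hp => hm p (Finset.mem_insert_of_mem hp))
        (fun p hp q hq hpq => hd p (Finset.mem_insert_of_mem hp) q (Finset.mem_insert_of_mem hq) hpq)]

section Main

variable {Ω Υ : Type*} [MeasurableSpace Ω] [MeasurableSpace Υ]
variable (μ : VectorMeasure Ω ℍ[ℝ]) (ν : VectorMeasure Υ ℍ[ℝ])
  (π : VectorMeasure (Ω × Υ) ℍ[ℝ])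
  (mμ : Measure Ω) (mν : Measure Υ) [IsFiniteMeasure mμ] [IsFiniteMeasure mν]

lemma bound_on_rectAlg
    (hπ : ∀ (A : Set Ω) (B : Set Υ), MeasurableSet A → MeasurableSet B →
      π (A ×ˢ B) = μ A * ν B)
    (hmμ : ∀ A : Set Ω, MeasurableSet A → mμ A = qvar μ A)
    (hmν : ∀ B : Set Υ, MeasurableSet B → mν B = qvar ν B)
    {E : Set (Ω × Υ)} (hE : E ∈ rectAlg Ω Υ) :
    (‖π E‖₊ : ℝ≥0∞) ≤ (mμ.prod mν) E := by
  obtain ⟨s, hs1, hs2, rfl⟩ := hE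
  rw [vm_finset_biUnion π s _ (fun p hp => ((hs1 p hp).1).prod ((hs1 p hp).2)) hs2]
  calc (‖∑ p ∈ s, π (p.1 ×ˢ p.2)‖₊ : ℝ≥0∞)
      ≤ ∑ p ∈ s, (‖π (p.1 ×ˢ p.2)‖₊ : ℝ≥0∞) := by
        rw [← ENNReal.coe_finset_sum]
        exact_mod_cast nnnorm_sum_le _ _
    _ ≤ ∑ p ∈ s, (mμ.prod mν) (p.1 ×ˢ p.2) := by
        gcongr with p hp
        rw [hπ _ _ (hs1 p hp).1 (hs1 p hp).2, Measure.prod_prod]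
        calc (‖μ p.1 * ν p.2‖₊ : ℝ≥0∞) = (‖μ p.1‖₊ : ℝ≥0∞) * (‖ν p.2‖₊ : ℝ≥0∞) := by
              rw [nnnorm_mul, ENNReal.coe_mul]
          _ ≤ mμ p.1 * mν p.2 := by
              have h1 : (‖μ p.1‖₊ : ℝ≥0∞) ≤ mμ p.1 :=
                (hmμ _ (hs1 p hp).1) ▸ nnnorm_le_qvar μ (hs1 p hp).1
              have h2 : (‖ν p.2‖₊ : ℝ≥0∞) ≤ mν p.2 :=
                (hmν _ (hs1 p hp).2) ▸ nnnorm_le_qvar ν (hs1 p hp).2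
              exact mul_le_mul' h1 h2
    _ = (mμ.prod mν) (⋃ p ∈ s, p.1 ×ˢ p.2) := by
        rw [measure_biUnion_finset (fun p hp q hq hpq => hs2 p hp q hq hpq)
          (fun p hp => ((hs1 p hp).1).prod ((hs1 p hp).2))]

lemma core_bound
    (hπ : ∀ (A : Set Ω) (B : Set Υ), MeasurableSet A → MeasurableSet B →
      π (A ×ˢ B) = μ A * ν B)
    (hmμ : ∀ A : Set Ω, MeasurableSet A → mμ A = qvar μ A)
    (hmν : ∀ B : Set Υ, MeasurableSet B → mν B = qvar ν B)
    {C : Set (Ω × Υ)} (hC : MeasurableSet C) :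
    (‖π C‖₊ : ℝ≥0∞) ≤ (mμ.prod mν) C := by
  set P := mμ.prod mν with hP
  set L := P + qdom π with hL
  haveI : IsFiniteMeasure L := by rw [hL]; infer_instance
  have hdense : L.MeasureDense (rectAlg Ω Υ) :=
    Measure.MeasureDense.of_generateFrom_isSetAlgebra_finite L rectAlg_isSetAlgebra
      rectAlg_generateFrom
  refine ENNReal.le_of_forall_pos_le_add fun ε hε _ => ?_
  obtain ⟨E, hEmem, hEapp⟩ := hdense.approx C hC (measure_ne_top _ _) ((ε : ℝ) / 3)
    (by positivity)
  have hEm : MeasurableSet E := rectAlg_measurableSet hEmem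
  -- splitting identities
  have hsplitC : π C = π (C ∩ E) + π (C \ E) := by
    rw [← VectorMeasure.of_union (disjoint_sdiff_self_right.mono_left Set.inter_subset_right)
      (hC.inter hEm) (hC.diff hEm), Set.inter_union_diff]
  have hsplitE : π E = π (E ∩ C) + π (E \ C) := by
    rw [← VectorMeasure.of_union (disjoint_sdiff_self_right.mono_left Set.inter_subset_right)
      (hEm.inter hC) (hEm.diff hC), Set.inter_union_diff]
  have hCE : π (C ∩ E) = π E - π (E \ C) := by
    rw [hsplitE, Set.inter_comm]
    exact (add_sub_cancel_right _ _).symm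
  -- norm bounds
  have hb1 : (‖π C‖₊ : ℝ≥0∞) ≤ (‖π E‖₊ : ℝ≥0∞) + (‖π (E \ C)‖₊ : ℝ≥0∞)
      + (‖π (C \ E)‖₊ : ℝ≥0∞) := by
    calc (‖π C‖₊ : ℝ≥0∞) ≤ (‖π (C ∩ E)‖₊ : ℝ≥0∞) + (‖π (C \ E)‖₊ : ℝ≥0∞) := by
          rw [hsplitC]; exact_mod_cast nnnorm_add_le _ _
      _ ≤ ((‖π E‖₊ : ℝ≥0∞) + (‖π (E \ C)‖₊ : ℝ≥0∞)) + (‖π (C \ E)‖₊ : ℝ≥0∞) := by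
          gcongr
          rw [hCE]
          exact_mod_cast nnnorm_sub_le _ _
  -- symmetric difference bounds
  have hsub1 : E \ C ⊆ C ∆ E := by rw [Set.symmDiff_def]; exact Set.subset_union_right
  have hsub2 : C \ E ⊆ C ∆ E := by rw [Set.symmDiff_def]; exact Set.subset_union_left
  have hqd1 : (‖π (E \ C)‖₊ : ℝ≥0∞) ≤ L (C ∆ E) :=
    le_trans (ennnorm_le_qdom π (hEm.diff hC)) (le_trans (measure_mono hsub1)
      (by rw [hL]; simp [Measure.add_apply]))
  have hqd2 : (‖π (C \ E)‖₊ : ℝ≥0∞) ≤ L (C ∆ E) :=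
    le_trans (ennnorm_le_qdom π (hC.diff hEm)) (le_trans (measure_mono hsub2)
      (by rw [hL]; simp [Measure.add_apply]))
  have hPE : (‖π E‖₊ : ℝ≥0∞) ≤ P C + L (C ∆ E) := by
    calc (‖π E‖₊ : ℝ≥0∞) ≤ P E := bound_on_rectAlg μ ν π mμ mν hπ hmμ hmν hEmem
      _ ≤ P (C ∪ (E \ C)) := measure_mono (by
            intro x hx
            by_cases h : x ∈ C
            · exact Or.inl h
            · exact Or.inr ⟨hx, h⟩)
      _ ≤ P C + P (E \ C) := measure_union_le _ _
      _ ≤ P C + L (C ∆ E) := by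
          gcongr
          exact Measure.le_add_right le_rfl
  have h3eps : L (C ∆ E) + L (C ∆ E) + L (C ∆ E) ≤ (ε : ℝ≥0∞) := by
    have := hEapp.le
    calc L (C ∆ E) + L (C ∆ E) + L (C ∆ E)
        ≤ ENNReal.ofReal ((ε : ℝ) / 3) + ENNReal.ofReal ((ε : ℝ) / 3)
          + ENNReal.ofReal ((ε : ℝ) / 3) := by gcongr
      _ = ENNReal.ofReal ((ε : ℝ) / 3 + (ε : ℝ) / 3 + (ε : ℝ) / 3) := by
          rw [← ENNReal.ofReal_add (by positivity) (by positivity),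
            ← ENNReal.ofReal_add (by positivity) (by positivity)]
      _ = (ε : ℝ≥0∞) := by
          rw [show ((ε : ℝ) / 3 + (ε : ℝ) / 3 + (ε : ℝ) / 3) = (ε : ℝ) by ring,
            ENNReal.ofReal_coe_nnreal]
  calc (‖π C‖₊ : ℝ≥0∞) ≤ (‖π E‖₊ : ℝ≥0∞) + (‖π (E \ C)‖₊ : ℝ≥0∞)
        + (‖π (C \ E)‖₊ : ℝ≥0∞) := hb1
    _ ≤ (P C + L (C ∆ E)) + L (C ∆ E) + L (C ∆ E) := by gcongr
    _ = P C + (L (C ∆ E) + L (C ∆ E) + L (C ∆ E)) := by ring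
    _ ≤ P C + (ε : ℝ≥0∞) := by gcongr

lemma qvar_mul_le
    (hπ : ∀ (A : Set Ω) (B : Set Υ), MeasurableSet A → MeasurableSet B →
      π (A ×ˢ B) = μ A * ν B) :
    qvar μ Set.univ * qvar ν Set.univ ≤ qvar π Set.univ := by
  rw [show qvar μ Set.univ = ⨆ (p : ℕ → Set Ω) (_ : ∀ i, MeasurableSet (p i))
      (_ : Pairwise (Function.onFun Disjoint p)) (_ : (⋃ i, p i) = Set.univ),
      ∑' i, (‖μ (p i)‖₊ : ℝ≥0∞) from rfl, ENNReal.iSup_mul]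
  refine iSup_le fun a => ?_
  rw [ENNReal.iSup_mul]
  refine iSup_le fun ha1 => ?_
  rw [ENNReal.iSup_mul]
  refine iSup_le fun ha2 => ?_
  rw [ENNReal.iSup_mul]
  refine iSup_le fun ha3 => ?_
  rw [show qvar ν Set.univ = ⨆ (q : ℕ → Set Υ) (_ : ∀ i, MeasurableSet (q i))
      (_ : Pairwise (Function.onFun Disjoint q)) (_ : (⋃ i, q i) = Set.univ),
      ∑' i, (‖ν (q i)‖₊ : ℝ≥0∞) from rfl, ENNReal.mul_iSup]
  refine iSup_le fun b => ?_
  rw [ENNReal.mul_iSup]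
  refine iSup_le fun hb1 => ?_
  rw [ENNReal.mul_iSup]
  refine iSup_le fun hb2 => ?_
  rw [ENNReal.mul_iSup]
  refine iSup_le fun hb3 => ?_
  set e : ℕ ≃ ℕ × ℕ := (Denumerable.eqv (ℕ × ℕ)).symm with he
  set r : ℕ → Set (Ω × Υ) := fun n => a (e n).1 ×ˢ b (e n).2 with hr
  have h1 : ∀ n, MeasurableSet (r n) := fun n => (ha1 _).prod (hb1 _)
  have h2 : Pairwise (Function.onFun Disjoint r) := by
    intro n m hnm
    have hne : e n ≠ e m := fun h => hnm (e.injective h)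
    unfold Function.onFun
    rcases eq_or_ne (e n).1 (e m).1 with h1' | h1'
    · have h2' : (e n).2 ≠ (e m).2 := fun h => hne (Prod.ext h1' h)
      exact prod_disjoint_of_snd (hb2 h2')
    · exact prod_disjoint_of_fst (ha2 h1')
  have h3 : (⋃ n, r n) = Set.univ := by
    ext ⟨x, y⟩
    simp only [Set.mem_iUnion, Set.mem_univ, iff_true]
    have hx : x ∈ ⋃ i, a i := ha3 ▸ Set.mem_univ x
    have hy : y ∈ ⋃ j, b j := hb3 ▸ Set.mem_univ y
    obtain ⟨i, hi⟩ := Set.mem_iUnion.1 hx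
    obtain ⟨j, hj⟩ := Set.mem_iUnion.1 hy
    refine ⟨e.symm (i, j), ?_⟩
    rw [hr]
    simp only [Equiv.apply_symm_apply]
    exact ⟨hi, hj⟩
  have htsum : ∑' n, (‖π (r n)‖₊ : ℝ≥0∞)
      = (∑' i, (‖μ (a i)‖₊ : ℝ≥0∞)) * ∑' j, (‖ν (b j)‖₊ : ℝ≥0∞) := by
    have : ∑' n, (‖π (r n)‖₊ : ℝ≥0∞)
        = ∑' p : ℕ × ℕ, (‖π (a p.1 ×ˢ b p.2)‖₊ : ℝ≥0∞) :=
      Equiv.tsum_eq e (fun p : ℕ × ℕ => (‖π (a p.1 ×ˢ b p.2)‖₊ : ℝ≥0∞))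
    rw [this, ENNReal.tsum_prod']
    have heq : ∀ i j, (‖π (a i ×ˢ b j)‖₊ : ℝ≥0∞)
        = (‖μ (a i)‖₊ : ℝ≥0∞) * (‖ν (b j)‖₊ : ℝ≥0∞) := by
      intro i j
      rw [hπ _ _ (ha1 i) (hb1 j), nnnorm_mul, ENNReal.coe_mul]
    calc ∑' i, ∑' j, (‖π (a i ×ˢ b j)‖₊ : ℝ≥0∞)
        = ∑' i, ∑' j, (‖μ (a i)‖₊ : ℝ≥0∞) * (‖ν (b j)‖₊ : ℝ≥0∞) := by
          simp_rw [heq]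
      _ = ∑' i, (‖μ (a i)‖₊ : ℝ≥0∞) * ∑' j, (‖ν (b j)‖₊ : ℝ≥0∞) := by
          simp_rw [ENNReal.tsum_mul_left]
      _ = (∑' i, (‖μ (a i)‖₊ : ℝ≥0∞)) * ∑' j, (‖ν (b j)‖₊ : ℝ≥0∞) :=
          ENNReal.tsum_mul_right
  rw [← htsum]
  exact le_qvar π h1 h2 h3

end Main


/-- `|μ × ν| = |μ| × |ν|`. -/
theorem stmt9 (μ : VectorMeasure Ω ℍ[ℝ]) (ν : VectorMeasure Υ ℍ[ℝ])
    (π : VectorMeasure (Ω × Υ) ℍ[ℝ])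
    (hπ : ∀ (A : Set Ω) (B : Set Υ), MeasurableSet A → MeasurableSet B →
      π (A ×ˢ B) = μ A * ν B)
    (mμ : Measure Ω) (mν : Measure Υ) [IsFiniteMeasure mμ] [IsFiniteMeasure mν]
    (hmμ : ∀ A : Set Ω, MeasurableSet A → mμ A = qvar μ A)
    (hmν : ∀ B : Set Υ, MeasurableSet B → mν B = qvar ν B) :
    ∀ C : Set (Ω × Υ), MeasurableSet C → qvar π C = (mμ.prod mν) C := by
  intro C hC
  have core : ∀ D : Set (Ω × Υ), MeasurableSet D → (‖π D‖₊ : ℝ≥0∞) ≤ (mμ.prod mν) D :=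
    fun D hD => core_bound μ ν π mμ mν hπ hmμ hmν hD
  have hle : qvar π C ≤ (mμ.prod mν) C := qvar_le_measure π _ core
  have hlec : qvar π Cᶜ ≤ (mμ.prod mν) Cᶜ := qvar_le_measure π _ core
  refine le_antisymm hle ?_
  have hge : (mμ.prod mν) Set.univ ≤ qvar π Set.univ := by
    rw [show (Set.univ : Set (Ω × Υ)) = Set.univ ×ˢ Set.univ from Set.univ_prod_univ.symm,
      Measure.prod_prod, hmμ _ MeasurableSet.univ, hmν _ MeasurableSet.univ,
      Set.univ_prod_univ]
    exact qvar_mul_le μ ν π hπ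
  have hsplit : (mμ.prod mν) C + (mμ.prod mν) Cᶜ = (mμ.prod mν) Set.univ :=
    measure_add_measure_compl hC
  have hkey : (mμ.prod mν) C + (mμ.prod mν) Cᶜ ≤ qvar π C + (mμ.prod mν) Cᶜ := by
    calc (mμ.prod mν) C + (mμ.prod mν) Cᶜ = (mμ.prod mν) Set.univ := hsplit
      _ ≤ qvar π Set.univ := hge
      _ ≤ qvar π C + qvar π Cᶜ := qvar_subadd π hC
      _ ≤ qvar π C + (mμ.prod mν) Cᶜ := by gcongr
  exact (ENNReal.add_le_add_iff_right (measure_ne_top _ _)).1 hkey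
end
end

section
/- For quaternions p and s with -(ω+ε) < Re(s) ≤ ω+ε applicable and with Re(p) < -ω < Re(s), define the quaternionic measure μ_p on Borel sets of ℝ by dμ_p(t) = -𝟙_{[0,∞)}(t)·e^{tp} dt. Then its quaternionic bilateral Laplace–Stieltjes transform satisfies ∫_ℝ dμ_p(t)·e^{-ts} = S_R^{-1}(p,s), i.e. -∫_0^∞ e^{tp} e^{-ts} dt = -(s - conj(p))·(s² - 2Re(p)s + |p|²)^{-1}. -/
open scoped Quaternion
open MeasureTheory Filter

noncomputable section

/-- The right noncommutative Cauchy kernel `S_R^{-1}(p,s)`. -/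
def SR (p s : ℍ[ℝ]) : ℍ[ℝ] :=
  -((s - star p) * (s ^ 2 - 2 * (p.re : ℍ[ℝ]) * s + ((‖p‖ ^ 2 : ℝ) : ℍ[ℝ]))⁻¹)

set_option maxHeartbeats 1600000 in
theorem stmt15 (p s : ℍ[ℝ]) (ω : ℝ) (hω : 0 ≤ ω)
    (h1 : p.re < -ω) (h2 : -ω < s.re) :
    -∫ t in Set.Ioi (0 : ℝ),
        NormedSpace.exp (t • p) * NormedSpace.exp (-(t • s)) = SR p s := by
  have hab : p.re - s.re < 0 := by linarith
  set F : ℝ → ℍ[ℝ] := fun t => NormedSpace.exp (t • p) * NormedSpace.exp (-(t • s))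
    with hF_def
  -- norm of F
  have hnorm : ∀ t : ℝ, ‖F t‖ = Real.exp ((p.re - s.re) * t) := by
    intro t
    have e1 : ‖NormedSpace.exp (t • p)‖ = Real.exp (t * p.re) := by
      rw [Quaternion.norm_exp, ← Real.exp_eq_exp_ℝ]
      simp [Real.abs_exp]
    have e2 : ‖NormedSpace.exp (-(t • s))‖ = Real.exp (-(t * s.re)) := by
      rw [Quaternion.norm_exp, ← Real.exp_eq_exp_ℝ]
      simp [Real.abs_exp]
    rw [hF_def, norm_mul, e1, e2, ← Real.exp_add]
    ring_nf
  -- continuity of F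
  have hFc : Continuous F := by
    letI : NormedAlgebra ℚ ℍ[ℝ] := NormedAlgebra.restrictScalars ℚ ℝ ℍ[ℝ]
    apply Continuous.mul
    · exact NormedSpace.exp_continuous.comp (continuous_id.smul continuous_const)
    · exact NormedSpace.exp_continuous.comp (continuous_id.smul continuous_const).neg
  -- integrability of F
  have hgi : IntegrableOn (fun t : ℝ => Real.exp ((p.re - s.re) * t)) (Set.Ioi 0) := by
    have := exp_neg_integrableOn_Ioi 0 (show (0:ℝ) < s.re - p.re by linarith)
    refine this.congr_fun (fun t _ => by ring_nf) measurableSet_Ioi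
  have hFi : IntegrableOn F (Set.Ioi 0) := by
    refine Integrable.mono' hgi hFc.aestronglyMeasurable ?_
    filter_upwards with t
    rw [hnorm t]
  -- derivative of F
  have hderiv : ∀ t : ℝ, HasDerivAt F (p * F t - F t * s) t := by
    intro t
    have d1 : HasDerivAt (fun u : ℝ => NormedSpace.exp (u • p))
        (p * NormedSpace.exp (t • p)) t := hasDerivAt_exp_smul_const' p t
    have d2 : HasDerivAt (fun u : ℝ => NormedSpace.exp (-(u • s)))
        (NormedSpace.exp (-(t • s)) * (-s)) t := by
      have := hasDerivAt_exp_smul_const (-s) t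
      simpa [smul_neg] using this
    have := d1.mul d2
    refine HasDerivAt.congr_deriv this ?_
    simp only [hF_def]
    noncomm_ring
  -- integrability of F'
  have hF'i : IntegrableOn (fun t => p * F t - F t * s) (Set.Ioi 0) :=
    (hFi.const_mul p).sub (hFi.mul_const s)
  -- F tends to 0 at infinity
  have htend : Tendsto F atTop (nhds (0 : ℍ[ℝ])) := by
    rw [tendsto_zero_iff_norm_tendsto_zero]
    have : Tendsto (fun t : ℝ => (p.re - s.re) * t) atTop atBot :=
      Tendsto.const_mul_atTop_of_neg hab tendsto_id
    have h := Real.tendsto_exp_atBot.comp this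
    exact h.congr fun t => (hnorm t).symm
  have hF0 : F 0 = 1 := by simp [hF_def]
  have key : ∫ t in Set.Ioi (0:ℝ), (p * F t - F t * s) = (0:ℍ[ℝ]) - F 0 :=
    integral_Ioi_of_hasDerivAt_of_tendsto hFc.continuousWithinAt
      (fun x _ => hderiv x) hF'i htend
  set I : ℍ[ℝ] := ∫ t in Set.Ioi (0:ℝ), F t with hI_def
  have hL : ∫ t in Set.Ioi (0:ℝ), p * F t = p * I := by
    simpa using (ContinuousLinearMap.mul ℝ ℍ[ℝ] p).integral_comp_comm hFi
  have hR : ∫ t in Set.Ioi (0:ℝ), F t * s = I * s := by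
    simpa using ((ContinuousLinearMap.mul ℝ ℍ[ℝ]).flip s).integral_comp_comm hFi
  rw [integral_sub (hFi.const_mul p) (hFi.mul_const s), hL, hR, hF0, zero_sub] at key
  have hIs : I * s = 1 + p * I := by
    have hp' : p * I = -1 + I * s := sub_eq_iff_eq_add.mp key
    rw [hp']; abel
  -- characteristic polynomial of p
  have hc : ‖p‖ ^ 2 = p.re^2 + p.imI^2 + p.imJ^2 + p.imK^2 := by
    rw [sq, ← Quaternion.normSq_eq_norm_mul_self, Quaternion.normSq_def']
  have htwo : ((2 : ℝ) : ℍ[ℝ]) = 2 := by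
    have h' : ((2 : ℝ) : ℍ[ℝ]) = (((2 : ℕ) : ℝ) : ℍ[ℝ]) := by norm_num
    rw [h', Quaternion.coe_natCast]; norm_num
  have h2c : (2 : ℍ[ℝ]) * ((p.re : ℝ) : ℍ[ℝ]) = ((2 * p.re : ℝ) : ℍ[ℝ]) := by
    rw [Quaternion.coe_mul, htwo]
  have hc2 : ((‖p‖ ^ 2 : ℝ) : ℍ[ℝ]) = 2 * (p.re : ℍ[ℝ]) * p - p ^ 2 := by
    rw [h2c]
    ext <;>
      simp [sq, Quaternion.re_mul, Quaternion.imI_mul, Quaternion.imJ_mul,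
        Quaternion.imK_mul, hc] <;> ring
  have h2' : I * (s * s) = s + p + p * (p * I) := by
    rw [← mul_assoc, hIs, add_mul, one_mul, mul_assoc p I s, hIs]
    noncomm_ring
  have hIr : I * ((p.re : ℝ) : ℍ[ℝ]) = ((p.re : ℝ) : ℍ[ℝ]) * I :=
    (Quaternion.coe_commutes _ _).symm
  have hIc : I * ((‖p‖ ^ 2 : ℝ) : ℍ[ℝ]) = ((‖p‖ ^ 2 : ℝ) : ℍ[ℝ]) * I :=
    (Quaternion.coe_commutes _ _).symm
  have expand : I * (s ^ 2 - 2 * (p.re : ℍ[ℝ]) * s + ((‖p‖ ^ 2 : ℝ) : ℍ[ℝ])) =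
      I * (s * s) - 2 * ((I * ((p.re : ℝ) : ℍ[ℝ])) * s) + I * ((‖p‖ ^ 2 : ℝ) : ℍ[ℝ]) := by
    noncomm_ring
  have hQI : I * (s ^ 2 - 2 * (p.re : ℍ[ℝ]) * s + ((‖p‖ ^ 2 : ℝ) : ℍ[ℝ])) = s - star p := by
    rw [expand, hIr, hIc, h2', mul_assoc ((p.re : ℝ) : ℍ[ℝ]) I s, hIs, hc2,
      Quaternion.star_eq_two_re_sub, Quaternion.coe_mul, htwo]
    noncomm_ring
  -- the denominator is nonzero
  have hQ0 : (s ^ 2 - 2 * (p.re : ℍ[ℝ]) * s + ((‖p‖ ^ 2 : ℝ) : ℍ[ℝ])) ≠ 0 := by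
    intro h
    rw [h2c, Quaternion.ext_iff] at h
    obtain ⟨e1, e2, e3, e4⟩ := h
    simp [sq, Quaternion.re_mul, Quaternion.imI_mul, Quaternion.imJ_mul,
      Quaternion.imK_mul] at e1 e2 e3 e4
    have hba : p.re < s.re := by linarith
    have hi : s.imI = 0 := by
      have : (s.re - p.re) * s.imI = 0 := by linear_combination e2 / 2
      rcases mul_eq_zero.mp this with h' | h'
      · linarith
      · exact h'
    have hj : s.imJ = 0 := by
      have : (s.re - p.re) * s.imJ = 0 := by linear_combination e3 / 2
      rcases mul_eq_zero.mp this with h' | h'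
      · linarith
      · exact h'
    have hk : s.imK = 0 := by
      have : (s.re - p.re) * s.imK = 0 := by linear_combination e4 / 2
      rcases mul_eq_zero.mp this with h' | h'
      · linarith
      · exact h'
    rw [hi, hj, hk] at e1
    nlinarith [e1, hc, sq_nonneg (s.re - p.re), sq_nonneg p.imI, sq_nonneg p.imJ,
      sq_nonneg p.imK]
  -- conclude
  show -I = SR p s
  rw [SR, ← hQI, mul_assoc, mul_inv_cancel₀ hQ0, mul_one]
end
end
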